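/- arXiv:1501.00204 — 6 statements merged into one kernel-verified Lean document; each statement's English description precedes it below -/
import Mathlib

section
/- For n ≥ 3, the complete bipartite graph K_{2,n} admits a unit-distance embedding in R^3 but not in R^2; that is, dim(K_{2,n}) = 3. -/
/-!
In the plane, two distinct unit circles meet in at most two points, so the two vertices of the
small side of `K_{2,n}` cannot both be at unit distance from three distinct points. In space, put
the small side at `(0, 0, ±12/13)` and the `n` other vertices on the circle of radius `5/13` in the
plane `z = 0`: a `5`-`12`-`13` triangle gives the unit edges, the circle has diameter `10/13 < 1`,
and the two apices are `24/13` apart.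
-/

open Function Real

def IsUnitDistanceEmbedding {V P : Type*} [MetricSpace P] (G : SimpleGraph V) (f : V → P) :
    Prop :=
  Injective f ∧ ∀ u v, dist (f u) (f v) = 1 ↔ G.Adj u v

theorem isUnitDistanceEmbedding_sumElim {ι κ P : Type*} [MetricSpace P] {f : ι → P} {g : κ → P}
    (hf : Injective f) (hg : Injective g) (hff : ∀ i i', dist (f i) (f i') ≠ 1)
    (hgg : ∀ k k', dist (g k) (g k') ≠ 1) (hfg : ∀ i k, dist (f i) (g k) = 1) :
    IsUnitDistanceEmbedding (completeBipartiteGraph ι κ) (Sum.elim f g) := by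
  refine ⟨hf.sumElim hg fun i k h => by simpa [h] using hfg i k, ?_⟩
  rintro (i | k) (i' | k')
  · simp [hff]
  · simp [hfg]
  · simp [dist_comm (g k), hfg]
  · simp [hgg]

theorem not_isUnitDistanceEmbedding_completeBipartiteGraph_of_finrank_eq_two {V P : Type*}
    [NormedAddCommGroup V] [InnerProductSpace ℝ V] [MetricSpace P] [NormedAddTorsor V P]
    [FiniteDimensional ℝ V] (hd : Module.finrank ℝ V = 2) {n : ℕ} (hn : 3 ≤ n)
    (f : Fin 2 ⊕ Fin n → P) :
    ¬ IsUnitDistanceEmbedding (completeBipartiteGraph (Fin 2) (Fin n)) f := by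
  rintro ⟨hf, hdist⟩
  have hunit (j : Fin 2) (k : Fin n) : dist (f (.inr k)) (f (.inl j)) = 1 := by simp [hdist]
  let k : Fin 3 → Fin n := Fin.castLE hn
  have hne {i j : Fin 3} (hij : i ≠ j) : f (.inr (k i)) ≠ f (.inr (k j)) :=
    hf.ne <| by simpa [k] using hij
  rcases EuclideanGeometry.eq_of_dist_eq_of_dist_eq_of_finrank_eq_two hd
      (hf.ne (by simp) : f (.inl 0) ≠ f (.inl 1)) (hne (by decide : (0 : Fin 3) ≠ 1))
      (hunit 0 _) (hunit 0 _) (hunit 0 (k 2)) (hunit 1 _) (hunit 1 _) (hunit 1 _) with h | h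
  · exact hne (by decide) h
  · exact hne (by decide) h

noncomputable def axisPoint (s : ℝ) : EuclideanSpace ℝ (Fin 3) := !₂[0, 0, s]

noncomputable def circlePoint (r θ : ℝ) : EuclideanSpace ℝ (Fin 3) := !₂[r * cos θ, r * sin θ, 0]

theorem dist_axisPoint (s t : ℝ) : dist (axisPoint s) (axisPoint t) = |s - t| := by
  simp [axisPoint, EuclideanSpace.dist_eq, Fin.sum_univ_three, Real.dist_eq, sqrt_sq_eq_abs]

theorem axisPoint_injective : Injective axisPoint := fun s t h => by
  simpa [dist_axisPoint, sub_eq_zero] using dist_eq_zero.2 h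

theorem norm_circlePoint (r θ : ℝ) : ‖circlePoint r θ‖ = |r| := by
  simp [circlePoint, EuclideanSpace.norm_eq, Fin.sum_univ_three, mul_pow, ← mul_add, sqrt_sq_eq_abs]

theorem dist_axisPoint_circlePoint (s r θ : ℝ) :
    dist (axisPoint s) (circlePoint r θ) = √(s ^ 2 + r ^ 2) := by
  simp [axisPoint, circlePoint, EuclideanSpace.dist_eq, Fin.sum_univ_three, Real.dist_eq, mul_pow,
    ← mul_add, add_comm]

theorem injOn_circlePoint {r : ℝ} (hr : r ≠ 0) : Set.InjOn (circlePoint r) (Set.Icc 0 π) := by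
  intro θ hθ φ hφ h
  have := congrArg (fun x => x 0) h
  simp [circlePoint, hr] at this
  exact injOn_cos hθ hφ this

theorem exists_isUnitDistanceEmbedding_completeBipartiteGraph_fin_two (n : ℕ) :
    ∃ f : Fin 2 ⊕ Fin n → EuclideanSpace ℝ (Fin 3),
      IsUnitDistanceEmbedding (completeBipartiteGraph (Fin 2) (Fin n)) f := by
  let apex (j : Fin 2) : EuclideanSpace ℝ (Fin 3) := axisPoint (![12 / 13, -12 / 13] j)
  let rim (k : Fin n) : EuclideanSpace ℝ (Fin 3) := circlePoint (5 / 13) (k / n)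
  refine ⟨Sum.elim apex rim, isUnitDistanceEmbedding_sumElim ?_ ?_ ?_ ?_ ?_⟩
  · refine axisPoint_injective.comp fun i j h => ?_
    fin_cases i <;> fin_cases j <;> norm_num at h <;> rfl
  · have hn (k : Fin n) : (0 : ℝ) < n := by exact_mod_cast k.pos
    have hmem (k : Fin n) : (k / n : ℝ) ∈ Set.Icc 0 π := by
      refine ⟨by positivity, (div_le_one (hn k)).2 (by exact_mod_cast k.is_lt.le) |>.trans ?_⟩
      linarith [pi_gt_three]
    intro k k' h
    have := injOn_circlePoint (by norm_num) (hmem k) (hmem k') h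
    rw [div_left_inj' (hn k).ne'] at this
    exact Fin.ext (by exact_mod_cast this)
  · intro i j
    fin_cases i <;> fin_cases j <;> norm_num [apex, dist_axisPoint, abs_of_pos]
  · intro k k'
    refine ne_of_lt ((dist_le_norm_add_norm _ _).trans_lt ?_)
    norm_num [rim, norm_circlePoint]
  · intro j k
    fin_cases j <;> norm_num [apex, rim, dist_axisPoint_circlePoint]

/-- For `n ≥ 3`, the complete bipartite graph `K_{2,n}` admits a unit-distance embedding
in `ℝ³` but not in `ℝ²`; that is, `dim (K_{2,n}) = 3`.  Vertices are `Fin 2 ⊕ Fin n`,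
edges are exactly the cross pairs. -/
theorem dim_K2n (n : ℕ) (hn : 3 ≤ n) :
    (∃ f : Fin 2 ⊕ Fin n → EuclideanSpace ℝ (Fin 3),
      Function.Injective f ∧
      ∀ u v : Fin 2 ⊕ Fin n, dist (f u) (f v) = 1 ↔
        ((u.isLeft ∧ v.isRight) ∨ (u.isRight ∧ v.isLeft))) ∧
    ¬ (∃ f : Fin 2 ⊕ Fin n → EuclideanSpace ℝ (Fin 2),
      Function.Injective f ∧
      ∀ u v : Fin 2 ⊕ Fin n, dist (f u) (f v) = 1 ↔
        ((u.isLeft ∧ v.isRight) ∨ (u.isRight ∧ v.isLeft))) :=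
  ⟨exists_isUnitDistanceEmbedding_completeBipartiteGraph_fin_two n, fun ⟨f, hf⟩ =>
    not_isUnitDistanceEmbedding_completeBipartiteGraph_of_finrank_eq_two
      finrank_euclideanSpace_fin hn f hf⟩
end

section
/- The wheel with one spoke removed, W_{1,6} − {hub-rim edge to vertex v_1}, admits no unit-distance embedding in the plane: in any planar configuration realizing all remaining edges at unit distance with distinct points, the hub and v_1 are forced to be at distance exactly 1. -/
/-!
Put `h = f none` and `uₖ = f (some k)`. Two distinct points at distance `r` from both ends of a
segment `ab` in the plane are swapped by the point reflection in its midpoint, so they add up to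
`a + b`. Applied to the unit rhombi `h uₖ uₖ₊₁ uₖ₊₂` (`k = 1, 2, 3`) this gives
`uₖ₊₂ = h + uₖ₊₁ - uₖ`, hence `u₅ = 2h - u₂`. Applied to `h` and `u₀`, both at distance `1`
from `u₁` and `u₅`, it gives `u₀ = u₁ + u₅ - h`, so `h - u₀ = u₂ - u₁` has norm `1`.
-/

open Module

variable {V : Type*} [NormedAddCommGroup V] [InnerProductSpace ℝ V] [FiniteDimensional ℝ V]

theorem eq_add_sub_of_dist_eq_of_finrank_eq_two (hd : finrank ℝ V = 2) {a b x y : V} {r : ℝ}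
    (hab : a ≠ b) (hxy : x ≠ y) (hxa : dist x a = r) (hxb : dist x b = r)
    (hya : dist y a = r) (hyb : dist y b = r) : y = a + b - x := by
  have reflect : ∀ z : V, dist z a = r → dist z b = r →
      dist (a + b - z) a = r ∧ dist (a + b - z) b = r := by
    intro z hza hzb
    constructor
    · rw [dist_eq_norm, show a + b - z - a = b - z by abel, ← dist_eq_norm, dist_comm, hzb]
    · rw [dist_eq_norm, show a + b - z - b = a - z by abel, ← dist_eq_norm, dist_comm, hza]
  obtain ⟨hx'a, hx'b⟩ := reflect x hxa hxb
  obtain ⟨hy'a, hy'b⟩ := reflect y hya hyb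
  rcases EuclideanGeometry.eq_of_dist_eq_of_dist_eq_of_finrank_eq_two hd hab hxy hxa hya hx'a
    hxb hyb hx'b with hx | hx
  · rcases EuclideanGeometry.eq_of_dist_eq_of_dist_eq_of_finrank_eq_two hd hab hxy hxa hya hy'a
      hxb hyb hy'b with hy | hy
    · rw [← hy]; abel
    · -- both `x` and `y` would be the midpoint of `ab`
      have hmid : (2 : ℝ) • x = (2 : ℝ) • y := by
        rw [two_smul, two_smul, ← sub_eq_iff_eq_add.mp hx, ← sub_eq_iff_eq_add.mp hy]
      exact absurd (smul_right_injective V two_ne_zero hmid) hxy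
  · exact hx.symm

/-- The wheel `W_{1,6}` with the spoke to rim vertex `0` removed admits no unit-distance
embedding in the plane: any injective planar configuration realizing all remaining edges
(the other five spokes and the six rim edges) at unit distance forces the hub and rim
vertex `0` to be at distance exactly `1`. -/
theorem wheel6_minus_spoke_forced (f : Option (Fin 6) → EuclideanSpace ℝ (Fin 2))
    (hinj : Function.Injective f)
    (hspokes : ∀ k : Fin 6, k ≠ 0 → dist (f none) (f (some k)) = 1)
    (hrim : ∀ k : Fin 6, dist (f (some k)) (f (some (k + 1))) = 1) :
    dist (f none) (f (some 0)) = 1 := by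
  set h := f none
  set u : Fin 6 → EuclideanSpace ℝ (Fin 2) := fun k => f (some k)
  have hd : finrank ℝ (EuclideanSpace ℝ (Fin 2)) = 2 := finrank_euclideanSpace_fin
  have spoke : ∀ k, k ≠ 0 → dist (u k) h = 1 := fun k hk => by rw [dist_comm]; exact hspokes k hk
  have rim : ∀ k, dist (u (k + 1)) (u k) = 1 := fun k => by rw [dist_comm]; exact hrim k
  have rhombus : ∀ k : Fin 6, k ≠ 0 → k + 2 ≠ 0 → u (k + 2) = h + u (k + 1) - u k := by
    intro k hk hk2
    refine eq_add_sub_of_dist_eq_of_finrank_eq_two hd (hinj.ne (by simp)) (hinj.ne (by simp))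
      (spoke k hk) (hrim k) (spoke _ hk2) ?_
    rw [← rim (k + 1), add_assoc]
    rfl
  have h3 : u 3 = h + u 2 - u 1 := rhombus 1 (by decide) (by decide)
  have h4 : u 4 = h + u 3 - u 2 := rhombus 2 (by decide) (by decide)
  have h5 : u 5 = h + u 4 - u 3 := rhombus 3 (by decide) (by decide)
  have h0 : u 0 = u 1 + u 5 - h :=
    eq_add_sub_of_dist_eq_of_finrank_eq_two hd (hinj.ne (by decide)) (hinj.ne (by decide))
      (hspokes 1 (by decide)) (hspokes 5 (by decide)) (hrim 0) (rim 5)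
  rw [dist_eq_norm, show h - u 0 = u 2 - u 1 by rw [h0, h5, h4, h3]; abel, ← dist_eq_norm]
  exact rim 1
end

section
/- Define in R^3 the nine points A_5=(−√3/6,−1/2,−1/2), A_6=(−√3/6,1/2,−1/2), A_7=(√3/3,0,−1/2), A_1=(√3/3,0,1/2), A_2=(−√3/6,1/2,1/2), A_3=(−√3/6,−1/2,1/2), A_4=(−√3/6−√2/2,0,0), A_8=(√3/12+√2/4, 1/4+√6/4, 0), A_9=(√3/12+√2/4, −1/4−√6/4, 0). Then |A_1−A_7|=|A_2−A_6|=|A_3−A_5|=1, the triangles A_1A_2A_3 and A_5A_6A_7 are unit equilateral, and |A_4−A_2|=|A_4−A_3|=|A_4−A_5|=|A_4−A_6|=1. -/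
open Real

theorem dist_eq_sqrt_of_eq_vec3 {x y : EuclideanSpace ℝ (Fin 3)} {a b c d e f : ℝ}
    (hx : x = ![a, b, c]) (hy : y = ![d, e, f]) :
    dist x y = √((a - d) ^ 2 + (b - e) ^ 2 + (c - f) ^ 2) := by
  simp [EuclideanSpace.dist_eq, Fin.sum_univ_three, hx, hy, Real.dist_eq, sq_abs]

theorem dist_eq_one_of_eq_vec3 {x y : EuclideanSpace ℝ (Fin 3)} {a b c d e f : ℝ}
    (hx : x = ![a, b, c]) (hy : y = ![d, e, f])
    (h : (a - d) ^ 2 + (b - e) ^ 2 + (c - f) ^ 2 = 1) : dist x y = 1 := by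
  rw [dist_eq_sqrt_of_eq_vec3 hx hy, h, sqrt_one]

theorem fritsch_prism_pyramid_general (A : Fin 9 → EuclideanSpace ℝ (Fin 3))
    (h1 : A 0 = ![sqrt 3 / 3, 0, 1 / 2])
    (h2 : A 1 = ![-sqrt 3 / 6, 1 / 2, 1 / 2])
    (h3 : A 2 = ![-sqrt 3 / 6, -(1 / 2), 1 / 2])
    (h4 : A 3 = ![-sqrt 3 / 6 - sqrt 2 / 2, 0, 0])
    (h5 : A 4 = ![-sqrt 3 / 6, -(1 / 2), -(1 / 2)])
    (h6 : A 5 = ![-sqrt 3 / 6, 1 / 2, -(1 / 2)])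
    (h7 : A 6 = ![sqrt 3 / 3, 0, -(1 / 2)]) :
    dist (A 0) (A 6) = 1 ∧ dist (A 1) (A 5) = 1 ∧ dist (A 2) (A 4) = 1 ∧
    dist (A 0) (A 1) = 1 ∧ dist (A 1) (A 2) = 1 ∧ dist (A 2) (A 0) = 1 ∧
    dist (A 4) (A 5) = 1 ∧ dist (A 5) (A 6) = 1 ∧ dist (A 6) (A 4) = 1 ∧
    dist (A 3) (A 1) = 1 ∧ dist (A 3) (A 2) = 1 ∧
    dist (A 3) (A 4) = 1 ∧ dist (A 3) (A 5) = 1 := by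
  have s3 : √3 ^ 2 = 3 := sq_sqrt (by norm_num)
  have s2 : √2 ^ 2 = 2 := sq_sqrt (by norm_num)
  refine ⟨dist_eq_one_of_eq_vec3 h1 h7 ?_, dist_eq_one_of_eq_vec3 h2 h6 ?_,
    dist_eq_one_of_eq_vec3 h3 h5 ?_, dist_eq_one_of_eq_vec3 h1 h2 ?_,
    dist_eq_one_of_eq_vec3 h2 h3 ?_, dist_eq_one_of_eq_vec3 h3 h1 ?_,
    dist_eq_one_of_eq_vec3 h5 h6 ?_, dist_eq_one_of_eq_vec3 h6 h7 ?_,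
    dist_eq_one_of_eq_vec3 h7 h5 ?_, dist_eq_one_of_eq_vec3 h4 h2 ?_,
    dist_eq_one_of_eq_vec3 h4 h3 ?_, dist_eq_one_of_eq_vec3 h4 h5 ?_,
    dist_eq_one_of_eq_vec3 h4 h6 ?_⟩
  -- expanded, each squared distance is linear in √3 ^ 2 and √2 ^ 2
  all_goals linarith [s3, s2]

/-- The prism-plus-pyramid structure in the unit-distance embedding of the Fritsch graph:
the listed nine points in `ℝ³` satisfy the stated unit distances — the vertical prism
edges, the two unit equilateral triangles, and the four edges from the apex `A₄`. -/
theorem fritsch_prism_pyramid (A : Fin 9 → EuclideanSpace ℝ (Fin 3))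
    (h1 : A 0 = ![sqrt 3 / 3, 0, 1 / 2])
    (h2 : A 1 = ![-sqrt 3 / 6, 1 / 2, 1 / 2])
    (h3 : A 2 = ![-sqrt 3 / 6, -(1 / 2), 1 / 2])
    (h4 : A 3 = ![-sqrt 3 / 6 - sqrt 2 / 2, 0, 0])
    (h5 : A 4 = ![-sqrt 3 / 6, -(1 / 2), -(1 / 2)])
    (h6 : A 5 = ![-sqrt 3 / 6, 1 / 2, -(1 / 2)])
    (h7 : A 6 = ![sqrt 3 / 3, 0, -(1 / 2)])
    (h8 : A 7 = ![sqrt 3 / 12 + sqrt 2 / 4, 1 / 4 + sqrt 6 / 4, 0])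
    (h9 : A 8 = ![sqrt 3 / 12 + sqrt 2 / 4, -(1 / 4) - sqrt 6 / 4, 0]) :
    dist (A 0) (A 6) = 1 ∧ dist (A 1) (A 5) = 1 ∧ dist (A 2) (A 4) = 1 ∧
    dist (A 0) (A 1) = 1 ∧ dist (A 1) (A 2) = 1 ∧ dist (A 2) (A 0) = 1 ∧
    dist (A 4) (A 5) = 1 ∧ dist (A 5) (A 6) = 1 ∧ dist (A 6) (A 4) = 1 ∧
    dist (A 3) (A 1) = 1 ∧ dist (A 3) (A 2) = 1 ∧
    dist (A 3) (A 4) = 1 ∧ dist (A 3) (A 5) = 1 :=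
  fritsch_prism_pyramid_general A h1 h2 h3 h4 h5 h6 h7
end

section
/- There is no injective map f from the vertices of the Herschel graph to R^2 such that |f(u)-f(v)| = 1 for every edge uv; consequently the Euclidean dimension of the Herschel graph is at least 3. -/
/-- Coordinate form of the parallelogram/rhombus lemma: a unit quadrilateral in the
plane with distinct diagonally-opposite vertices must be a parallelogram. -/
lemma rhombus_coord (a0 a1 b0 b1 c0 c1 d0 d1 : ℝ)
    (hab : (a0 - b0)^2 + (a1 - b1)^2 = 1)
    (hbc : (b0 - c0)^2 + (b1 - c1)^2 = 1)
    (hcd : (c0 - d0)^2 + (c1 - d1)^2 = 1)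
    (hda : (d0 - a0)^2 + (d1 - a1)^2 = 1)
    (hac : ¬ (a0 = c0 ∧ a1 = c1))
    (hbd : ¬ (b0 = d0 ∧ b1 = d1)) :
    a0 + c0 = b0 + d0 ∧ a1 + c1 = b1 + d1 := by
  set e0 := d0 - b0 with he0
  set e1 := d1 - b1 with he1
  set p0 := a0 - c0 with hp0
  set p1 := a1 - c1 with hp1
  set s0 := a0 + c0 - b0 - d0 with hs0
  set s1 := a1 + c1 - b1 - d1 with hs1
  -- the diagonal a-c is perpendicular to b-d
  have hpe : p0 * e0 + p1 * e1 = 0 := by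
    simp only [hp0, hp1, he0, he1]
    linear_combination (hab - hda + hcd - hbc) / 2
  -- the "defect" s = a + c - b - d is perpendicular to b-d
  have hse : s0 * e0 + s1 * e1 = 0 := by
    simp only [hs0, hs1, he0, he1]
    linear_combination (hab - hda - hcd + hbc) / 2
  -- the defect s is perpendicular to a-c
  have hsp : s0 * p0 + s1 * p1 = 0 := by
    simp only [hs0, hs1, hp0, hp1]
    linear_combination (hab + hda - hcd - hbc) / 2
  -- since e ≠ 0, both s and p are orthogonal to e in the plane, hence parallel
  have hpar : s0 * p1 - s1 * p0 = 0 := by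
    rcases (by push_neg at hbd; tauto :
        ¬ (b0 = d0) ∨ (b0 = d0 ∧ ¬ (b1 = d1))) with h | ⟨_, h⟩
    · have he : e0 ≠ 0 := fun hz => h (by simp only [he0] at hz; linarith)
      have key : (s0 * p1 - s1 * p0) * e0 =
          p1 * (s0 * e0 + s1 * e1) - s1 * (p0 * e0 + p1 * e1) := by ring
      rw [hse, hpe] at key
      have := mul_eq_zero.mp (by linarith [key] : (s0 * p1 - s1 * p0) * e0 = 0)
      tauto
    · have he : e1 ≠ 0 := fun hz => h (by simp only [he1] at hz; linarith)
      have key : (s0 * p1 - s1 * p0) * e1 =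
          s0 * (p0 * e0 + p1 * e1) - p0 * (s0 * e0 + s1 * e1) := by ring
      rw [hse, hpe] at key
      have := mul_eq_zero.mp (by linarith [key] : (s0 * p1 - s1 * p0) * e1 = 0)
      tauto
  -- s ⟂ p and s ∥ p with p ≠ 0 forces s = 0
  have hpnz : p0 ^ 2 + p1 ^ 2 > 0 := by
    rcases (by push_neg at hac; tauto :
        ¬ (a0 = c0) ∨ (a0 = c0 ∧ ¬ (a1 = c1))) with h | ⟨_, h⟩
    · have : p0 ≠ 0 := fun hz => h (by simp only [hp0] at hz; linarith)
      positivity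
    · have : p1 ≠ 0 := fun hz => h (by simp only [hp1] at hz; linarith)
      positivity
  have hs0z : s0 = 0 := by
    have key : s0 * (p0 ^ 2 + p1 ^ 2) =
        p0 * (s0 * p0 + s1 * p1) + p1 * (s0 * p1 - s1 * p0) := by ring
    rw [hsp, hpar] at key
    have := mul_eq_zero.mp (by linarith [key] : s0 * (p0 ^ 2 + p1 ^ 2) = 0)
    rcases this with h | h
    · exact h
    · linarith
  have hs1z : s1 = 0 := by
    have key : s1 * (p0 ^ 2 + p1 ^ 2) =
        p1 * (s0 * p0 + s1 * p1) - p0 * (s0 * p1 - s1 * p0) := by ring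
    rw [hsp, hpar] at key
    have := mul_eq_zero.mp (by linarith [key] : s1 * (p0 ^ 2 + p1 ^ 2) = 0)
    rcases this with h | h
    · exact h
    · linarith
  constructor
  · simp only [hs0] at hs0z; linarith
  · simp only [hs1] at hs1z; linarith

/-- Point form of the rhombus lemma in `ℝ²`. -/
lemma rhombus (a b c d : EuclideanSpace ℝ (Fin 2))
    (hab : dist a b = 1) (hbc : dist b c = 1) (hcd : dist c d = 1)
    (hda : dist d a = 1) (hac : a ≠ c) (hbd : b ≠ d) :
    a + c = b + d := by
  have extract : ∀ x y : EuclideanSpace ℝ (Fin 2), dist x y = 1 →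
      (x 0 - y 0)^2 + (x 1 - y 1)^2 = 1 := by
    intro x y h
    rw [EuclideanSpace.dist_eq, Real.sqrt_eq_one] at h
    simpa [Fin.sum_univ_two, Real.dist_eq, sq_abs] using h
  have neq : ∀ x y : EuclideanSpace ℝ (Fin 2), x ≠ y → ¬ (x 0 = y 0 ∧ x 1 = y 1) := by
    intro x y h hc
    exact h (by ext i; fin_cases i <;> simp [hc.1, hc.2])
  obtain ⟨h0, h1⟩ := rhombus_coord (a 0) (a 1) (b 0) (b 1) (c 0) (c 1) (d 0) (d 1)
    (extract a b hab) (extract b c hbc) (extract c d hcd) (extract d a hda)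
    (neq a c hac) (neq b d hbd)
  ext i
  fin_cases i
  · simpa using h0
  · simpa using h1

/-- There is no injective map from the vertices of the Herschel graph (0-based labels)
to `ℝ²` realizing every edge at unit distance; hence the Euclidean dimension of the
Herschel graph is at least `3`. -/
theorem herschel_not_planar :
    ¬ ∃ f : Fin 11 → EuclideanSpace ℝ (Fin 2),
      Function.Injective f ∧
      dist (f 0) (f 1) = 1 ∧ dist (f 0) (f 3) = 1 ∧ dist (f 0) (f 6) = 1 ∧
      dist (f 0) (f 8) = 1 ∧ dist (f 1) (f 2) = 1 ∧ dist (f 1) (f 9) = 1 ∧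
      dist (f 2) (f 3) = 1 ∧ dist (f 2) (f 5) = 1 ∧ dist (f 2) (f 10) = 1 ∧
      dist (f 3) (f 4) = 1 ∧ dist (f 4) (f 5) = 1 ∧ dist (f 4) (f 6) = 1 ∧
      dist (f 5) (f 7) = 1 ∧ dist (f 6) (f 7) = 1 ∧ dist (f 7) (f 8) = 1 ∧
      dist (f 7) (f 10) = 1 ∧ dist (f 8) (f 9) = 1 ∧ dist (f 9) (f 10) = 1 := by
  rintro ⟨f, hinj, d01, d03, d06, d08, d12, d19, d23, d25, d210, d34, d45, d46,
    d57, d67, d78, d710, d89, d910⟩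
  have ne : ∀ i j : Fin 11, i ≠ j → f i ≠ f j := fun i j hij h => hij (hinj h)
  -- rhombus 0-1-2-3
  have R1 : f 0 + f 2 = f 1 + f 3 :=
    rhombus _ _ _ _ d01 d12 d23 (by rwa [dist_comm])
      (ne 0 2 (by decide)) (ne 1 3 (by decide))
  -- rhombus 0-6-7-8
  have R3 : f 0 + f 7 = f 6 + f 8 :=
    rhombus _ _ _ _ d06 d67 d78 (by rwa [dist_comm])
      (ne 0 7 (by decide)) (ne 6 8 (by decide))
  -- rhombus 2-3-4-5
  have R5 : f 2 + f 4 = f 3 + f 5 :=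
    rhombus _ _ _ _ d23 d34 d45 (by rwa [dist_comm])
      (ne 2 4 (by decide)) (ne 3 5 (by decide))
  -- rhombus 4-5-7-6
  have R9 : f 4 + f 7 = f 5 + f 6 :=
    rhombus _ _ _ _ d45 d57 (by rwa [dist_comm]) (by rwa [dist_comm])
      (ne 4 7 (by decide)) (ne 5 6 (by decide))
  -- combine: (R1 + R9) and (R3 + R5) have the same left side, hence f 1 = f 8
  have key : f 1 + (f 3 + f 5 + f 6) = f 8 + (f 3 + f 5 + f 6) := by
    have hA : (f 0 + f 2) + (f 4 + f 7) = (f 1 + f 3) + (f 5 + f 6) := by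
      rw [R1, R9]
    have hB : (f 0 + f 7) + (f 2 + f 4) = (f 6 + f 8) + (f 3 + f 5) := by
      rw [R3, R5]
    have : (f 1 + f 3) + (f 5 + f 6) = (f 6 + f 8) + (f 3 + f 5) := by
      rw [← hA, ← hB]; abel
    calc f 1 + (f 3 + f 5 + f 6) = (f 1 + f 3) + (f 5 + f 6) := by abel
      _ = (f 6 + f 8) + (f 3 + f 5) := this
      _ = f 8 + (f 3 + f 5 + f 6) := by abel
  exact ne 1 8 (by decide) (add_right_cancel key)
end

section
/- Let b = (1/2)√(5+2√5) and c = √(5+3√5)·(5−√5)/10. Place A_1 = (0,0,0), the five points A_k (k in the inner pentagon) at distance 2b·(unit vectors at angles 2πj/5) from the z-axis with z-coordinate c, and the five outer points as the pentagon with circumradius 1/(2 sin(π/5)) at z = c rotated by π/5. Then |A_1 − P| = 1 for each inner pentagon point P, each inner point is at distance 1 from the two nearest outer points and the two second-nearest inner-pentagon neighbors as prescribed by the Grötzsch graph edges. -/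
/-!
All points lie on circles about the `z`-axis, so each squared edge length is given by the law of
cosines `r₁² + r₂² - 2 r₁ r₂ cos (α - β) + (z₁ - z₂)²`. Modulo `2π` the angle differences along
the edges are `±3π/5` (inner–outer) and `2π/5` (outer cycle). Since `cos (2π/5) = (√5 - 1)/4`,
`(2b)² = (5 - 2√5)/5`, `c² = 2√5/5` and `(1 / (2 sin (π/5)))² = (5 + √5)/10`, each edge condition
becomes an identity in `ℚ(√5)`; the outer cycle is the side of a regular pentagon of circumradius
`1 / (2 sin (π/5))`.
-/

open Real

theorem dist_cylindrical (r₁ r₂ z₁ z₂ α β : ℝ) :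
    dist !₂[r₁ * cos α, r₁ * sin α, z₁] !₂[r₂ * cos β, r₂ * sin β, z₂] =
      √(r₁ ^ 2 + r₂ ^ 2 - 2 * r₁ * r₂ * cos (α - β) + (z₁ - z₂) ^ 2) := by
  rw [EuclideanSpace.dist_eq, Fin.sum_univ_three]
  simp only [Matrix.cons_val_zero, Matrix.cons_val_one, Matrix.cons_val_two,
    Matrix.head_cons, Matrix.tail_cons, Real.dist_eq, sq_abs]
  congr 1
  rw [cos_sub]
  linear_combination r₁ ^ 2 * sin_sq_add_cos_sq α + r₂ ^ 2 * sin_sq_add_cos_sq β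

/-- Wrapping around in `Fin n` changes the angle only by a multiple of `2π`. -/
theorem cos_two_pi_mul_fin_add_div_sub {n : ℕ} [NeZero n] (j k : Fin n) (φ θ : ℝ) :
    cos (2 * π * j / n + φ - (2 * π * (j + k : Fin n) / n + θ)) =
      cos (2 * π * k / n + θ - φ) := by
  have hn : (n : ℝ) ≠ 0 := Nat.cast_ne_zero.mpr (NeZero.ne n)
  have hjk : ((j + k : Fin n) : ℝ) = j + k - n * ((j + k : ℕ) / n : ℕ) := by
    rw [Fin.val_add, eq_sub_iff_add_eq, ← Nat.cast_mul, ← Nat.cast_add, ← Nat.cast_add,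
      Nat.mod_add_div]
  rw [hjk, ← cos_neg, ← cos_add_nat_mul_two_pi _ ((j + k : ℕ) / n)]
  congr 1
  field_simp
  ring

/-- A chord subtending the angle `2θ` in a circle of radius `1 / (2 sin θ)` has length `1`. -/
theorem one_div_two_mul_sin_chord {θ : ℝ} (h : sin θ ≠ 0) :
    (1 / (2 * sin θ)) ^ 2 + (1 / (2 * sin θ)) ^ 2
      - 2 * (1 / (2 * sin θ)) * (1 / (2 * sin θ)) * cos (2 * θ) = 1 := by
  rw [cos_two_mul, cos_sq']
  field_simp
  ring

theorem cos_two_pi_div_five : cos (2 * π / 5) = (√5 - 1) / 4 := by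
  rw [show 2 * π / 5 = 2 * (π / 5) by ring, cos_two_mul, cos_pi_div_five]
  linear_combination (1 / 8 : ℝ) * sq_sqrt (show (0 : ℝ) ≤ 5 by norm_num)

theorem cos_three_pi_div_five : cos (3 * π / 5) = -((√5 - 1) / 4) := by
  rw [show 3 * π / 5 = π - 2 * π / 5 by ring, cos_pi_sub, cos_two_pi_div_five]

theorem sin_pi_div_five_pos : 0 < sin (π / 5) :=
  sin_pos_of_pos_of_lt_pi (by positivity) (by linarith [pi_pos])

theorem sin_pi_div_five_sq : sin (π / 5) ^ 2 = (5 - √5) / 8 := by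
  rw [sin_sq, cos_pi_div_five]
  linear_combination (-1 / 16 : ℝ) * sq_sqrt (show (0 : ℝ) ≤ 5 by norm_num)

theorem sqrt_five_add_two_sqrt_five_mul_sin_pi_div_five :
    √(5 + 2 * √5) * sin (π / 5) = (5 + √5) / 4 := by
  have h5 : √5 ^ 2 = 5 := sq_sqrt (by norm_num)
  rw [← sq_eq_sq₀ (mul_nonneg (sqrt_nonneg _) sin_pi_div_five_pos.le) (by positivity), mul_pow,
    sin_pi_div_five_sq, sq_sqrt (by positivity)]
  linear_combination (-5 / 16 : ℝ) * h5

namespace Grotzsch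

theorem inner_radius_sq {b : ℝ} (hb : b = 1 / (2 * √(5 + 2 * √5))) :
    (2 * b) ^ 2 = (5 - 2 * √5) / 5 := by
  rw [hb]
  field_simp
  rw [sq_sqrt (by positivity)]
  linear_combination (4 : ℝ) * sq_sqrt (show (0 : ℝ) ≤ 5 by norm_num)

theorem height_sq {c : ℝ} (hc : c = √(5 + 3 * √5) * (5 - √5) / 10) : c ^ 2 = 2 * √5 / 5 := by
  rw [hc, div_pow, mul_pow, sq_sqrt (by positivity)]
  linear_combination ((3 * √5 - 25) / 100) * sq_sqrt (show (0 : ℝ) ≤ 5 by norm_num)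

theorem outer_radius_sq : (1 / (2 * sin (π / 5))) ^ 2 = (5 + √5) / 10 := by
  have h5 : √5 ^ 2 = 5 := sq_sqrt (by norm_num)
  rw [div_pow, mul_pow, sin_pi_div_five_sq, div_eq_div_iff (by nlinarith) (by norm_num)]
  linear_combination (1 / 2 : ℝ) * h5

theorem inner_radius_mul_outer_radius {b : ℝ} (hb : b = 1 / (2 * √(5 + 2 * √5))) :
    2 * b * (1 / (2 * sin (π / 5))) * (√5 - 1) = (3 * √5 - 5) / 5 := by
  have hsin := sin_pi_div_five_pos
  rw [hb]
  field_simp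
  linear_combination (-2 * (3 * √5 - 5)) * sqrt_five_add_two_sqrt_five_mul_sin_pi_div_five
    - (3 / 2 : ℝ) * sq_sqrt (show (0 : ℝ) ≤ 5 by norm_num)

end Grotzsch

/-- Unit-distance embedding of the Grötzsch graph in `ℝ³`: the apex at the origin, the
five "inner" vertices on a regular pentagon of radius `2b` at height `c`, and the five
"outer" vertices on a regular pentagon of circumradius `1/(2 sin (π/5))` at height `c`,
rotated by `π/5`.  All edges of the Grötzsch graph (apex–inner, inner–outer, and the
outer 5-cycle) have length exactly `1`. -/
theorem grotzsch_embedding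
    (b c : ℝ) (hb : b = 1 / (2 * sqrt (5 + 2 * sqrt 5)))
    (hc : c = sqrt (5 + 3 * sqrt 5) * (5 - sqrt 5) / 10)
    (apex : EuclideanSpace ℝ (Fin 3)) (inner outer : Fin 5 → EuclideanSpace ℝ (Fin 3))
    (happex : apex = !₂[0, 0, 0])
    (hinner : ∀ j : Fin 5,
      inner j = !₂[2 * b * cos (2 * π * j / 5), 2 * b * sin (2 * π * j / 5), c])
    (houter : ∀ j : Fin 5,
      outer j = !₂[(1 / (2 * sin (π / 5))) * cos (2 * π * j / 5 + π / 5),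
                  (1 / (2 * sin (π / 5))) * sin (2 * π * j / 5 + π / 5), c]) :
    ∀ j : Fin 5,
      dist apex (inner j) = 1 ∧
      dist (inner j) (outer (j + 1)) = 1 ∧
      dist (inner j) (outer (j + 3)) = 1 ∧
      dist (outer j) (outer (j + 1)) = 1 := by
  intro j
  have inner_outer (k : Fin 5) (hk : cos (2 * π * k / 5 + π / 5) = cos (3 * π / 5)) :
      dist (inner j) (outer (j + k)) = 1 := by
    have hcos := cos_two_pi_mul_fin_add_div_sub j k 0 (π / 5)
    rw [add_zero, sub_zero, Nat.cast_ofNat, hk] at hcos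
    rw [hinner, houter, dist_cylindrical, hcos, cos_three_pi_div_five, sub_self,
      zero_pow two_ne_zero, add_zero, sqrt_eq_one]
    linear_combination Grotzsch.inner_radius_sq hb + Grotzsch.outer_radius_sq
      + (1 / 2 : ℝ) * Grotzsch.inner_radius_mul_outer_radius hb
  refine ⟨?_, inner_outer 1 ?_, inner_outer 3 ?_, ?_⟩
  · rw [happex, hinner, show !₂[(0 : ℝ), 0, 0] = !₂[0 * cos 0, 0 * sin 0, 0] by simp,
      dist_cylindrical, sqrt_eq_one]
    linear_combination Grotzsch.inner_radius_sq hb + Grotzsch.height_sq hc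
  · rw [Fin.val_one]
    congr 1
    push_cast
    ring
  · rw [show ((3 : Fin 5) : ℕ) = 3 from rfl,
      show 2 * π * (3 : ℕ) / 5 + π / 5 = 2 * π - 3 * π / 5 by push_cast; ring, cos_two_pi_sub]
  · have hcos := cos_two_pi_mul_fin_add_div_sub j 1 (π / 5) (π / 5)
    rw [add_sub_cancel_right, Fin.val_one, Nat.cast_ofNat, Nat.cast_one, mul_one,
      show 2 * π / 5 = 2 * (π / 5) by ring] at hcos
    rw [houter, houter, dist_cylindrical, hcos, sub_self, zero_pow two_ne_zero, add_zero,
      sqrt_eq_one]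
    exact one_div_two_mul_sin_chord sin_pi_div_five_pos.ne'
end

section
/- In any graph G that contains three unit rhombi sharing sides in the cyclic pattern of the Möbius ladder M_6 (quadrilaterals 1254, 2365, 1634 all with unit sides), any map f: V → R^2 with |f(u)−f(v)| = 1 on all edges and with f(1)≠f(5), f(2)≠f(4), f(2)≠f(6), f(3)≠f(5), f(1)≠f(3), f(4)≠f(6) must satisfy f(3) = f(6). -/
/-!
In the plane, a rhombus with nondegenerate diagonals is a parallelogram: the line through each
diagonal is the perpendicular bisector of the other, so both diagonal midpoints lie on two
perpendicular lines and hence coincide. Applied to the three rhombi of the Möbius ladder, the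
parallelogram relations `f 3 - f 0 = f 4 - f 1 = f 5 - f 2` and `f 3 - f 0 = f 2 - f 5` force
`f 5 - f 2 = f 2 - f 5`.
-/

open AffineSubspace EuclideanGeometry Module RealInnerProductSpace EuclideanSpace

variable {V P : Type*} [NormedAddCommGroup V] [InnerProductSpace ℝ V] [MetricSpace P]
  [NormedAddTorsor V P]

theorem eq_zero_of_inner_eq_zero_of_inner_eq_zero [Fact (finrank ℝ V = 2)] {u v w : V}
    (hv : v ≠ 0) (hw : w ≠ 0) (hvw : ⟪v, w⟫ = 0) (hvu : ⟪v, u⟫ = 0) (hwu : ⟪w, u⟫ = 0) :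
    u = 0 := by
  obtain ⟨t, rfl⟩ := Submodule.mem_span_singleton.mp
    (Submodule.mem_span_singleton_of_inner_eq_zero_of_inner_eq_zero hv hw hvu hvw)
  rw [real_inner_smul_right, real_inner_self_eq_norm_sq] at hwu
  simp_all

theorem midpoint_mem_perpBisector_of_dist_eq {a c b d : P} (hb : dist b a = dist b c)
    (hd : dist d a = dist d c) : midpoint ℝ b d ∈ perpBisector a c :=
  AffineMap.lineMap_mem _ (mem_perpBisector_iff_dist_eq.mpr hb)
    (mem_perpBisector_iff_dist_eq.mpr hd)

theorem vsub_eq_vsub_of_rhombus [Fact (finrank ℝ V = 2)] {a b c d : P} {r : ℝ}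
    (hab : dist a b = r) (hbc : dist b c = r) (hcd : dist c d = r) (hda : dist d a = r)
    (hac : a ≠ c) (hbd : b ≠ d) : d -ᵥ a = c -ᵥ b := by
  have hdiag : ⟪c -ᵥ a, d -ᵥ b⟫ = 0 :=
    inner_vsub_vsub_of_dist_eq_of_dist_eq (by rw [dist_comm, hab, hda])
      (by rw [hbc, dist_comm, hcd])
  have hbd_mem : ⟪midpoint ℝ b d -ᵥ midpoint ℝ a c, c -ᵥ a⟫ = 0 :=
    mem_perpBisector_iff_inner_eq_zero.mp <| midpoint_mem_perpBisector_of_dist_eq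
      (by rw [dist_comm, hab, hbc]) (by rw [hda, dist_comm, hcd])
  have hac_mem : ⟪midpoint ℝ a c -ᵥ midpoint ℝ b d, d -ᵥ b⟫ = 0 :=
    mem_perpBisector_iff_inner_eq_zero.mp <| midpoint_mem_perpBisector_of_dist_eq
      (by rw [hab, dist_comm, hda]) (by rw [dist_comm, hbc, hcd])
  have hmid : midpoint ℝ b d -ᵥ midpoint ℝ a c = 0 := by
    refine eq_zero_of_inner_eq_zero_of_inner_eq_zero (vsub_ne_zero.mpr hac.symm)
      (vsub_ne_zero.mpr hbd.symm) hdiag ?_ ?_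
    · rwa [real_inner_comm]
    · rw [real_inner_comm, ← neg_vsub_eq_vsub_rev (midpoint ℝ a c), inner_neg_left, hac_mem,
        neg_zero]
  have hmid' := vsub_eq_zero_iff_eq.mp hmid
  rw [midpoint_comm a, eq_comm, midpoint_eq_midpoint_iff_vsub_eq_vsub] at hmid'
  exact hmid'.symm

/-- Three unit rhombi in the cyclic pattern of the Möbius ladder `M₆` (0-based vertices):
any map `f : Fin 6 → ℝ²` realizing the nine edges 01, 12, 23, 34, 45, 50, 03, 14, 25 at
unit distance, with the stated nondegeneracy conditions, must satisfy `f 2 = f 5`. -/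
theorem mobius_rhombi_collapse (f : Fin 6 → EuclideanSpace ℝ (Fin 2))
    (e01 : dist (f 0) (f 1) = 1) (e12 : dist (f 1) (f 2) = 1)
    (e23 : dist (f 2) (f 3) = 1) (e34 : dist (f 3) (f 4) = 1)
    (e45 : dist (f 4) (f 5) = 1) (e50 : dist (f 5) (f 0) = 1)
    (e03 : dist (f 0) (f 3) = 1) (e14 : dist (f 1) (f 4) = 1)
    (e25 : dist (f 2) (f 5) = 1)
    (n04 : f 0 ≠ f 4) (n13 : f 1 ≠ f 3) (n15 : f 1 ≠ f 5)
    (n24 : f 2 ≠ f 4) (n02 : f 0 ≠ f 2) (n35 : f 3 ≠ f 5) :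
    f 2 = f 5 := by
  have h0143 : f 3 - f 0 = f 4 - f 1 :=
    vsub_eq_vsub_of_rhombus e01 e14 ((dist_comm _ _).trans e34) ((dist_comm _ _).trans e03)
      n04 n13
  have h1254 : f 4 - f 1 = f 5 - f 2 :=
    vsub_eq_vsub_of_rhombus e12 e25 ((dist_comm _ _).trans e45) ((dist_comm _ _).trans e14)
      n15 n24
  have h0523 : f 3 - f 0 = f 2 - f 5 :=
    vsub_eq_vsub_of_rhombus ((dist_comm _ _).trans e50) ((dist_comm _ _).trans e25) e23
      ((dist_comm _ _).trans e03) n02 n35.symm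
  linear_combination (norm := module) (-2⁻¹ : ℝ) • (h0523 - h0143 - h1254)
end
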